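/- arXiv:2201.07062 — 2 statements merged into one kernel-verified Lean document; each statement's English description precedes it below -/
import Mathlib

section
/- If a finite group G of odd order acts linearly on a nontrivial finite-dimensional vector space V over a finite field F of odd characteristic, then there exist two distinct G-orbits in V \ {0} of equal cardinality. -/
/-!
If `v ≠ 0`, then `v` and `-v` lie in distinct orbits of the same size: negation maps one orbit
bijectively onto the other, and if `g • v = -v` then `g ^ n • v = (-1) ^ n • v`, so taking `n` the
(odd) order of `g` gives `v = -v`, impossible in odd characteristic.
-/

namespace Module.End

variable {R V : Type*} [Ring R] [AddCommGroup V] [Module R V]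

theorem pow_apply_of_apply_eq_neg {f : Module.End R V} {v : V} (hv : f v = -v) (k : ℕ) :
    (f ^ k) v = (-1 : R) ^ k • v := by
  induction k with
  | zero => simp
  | succ k ih => rw [pow_succ, mul_apply, hv, map_neg, ih, pow_succ, mul_neg_one, neg_smul]

theorem neg_eq_self_of_apply_eq_neg {f : Module.End R V} {n : ℕ} (hn : Odd n) (hf : f ^ n = 1)
    {v : V} (hv : f v = -v) : -v = v := by
  simpa [hf, hn.neg_one_pow] using (pow_apply_of_apply_eq_neg hv n).symm

end Module.End

theorem eq_zero_of_neg_eq_self {F V : Type*} [DivisionRing F] [AddCommGroup V] [Module F V]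
    (hF : ringChar F ≠ 2) {v : V} (h : -v = v) : v = 0 := by
  have h2 : (2 : F) • v = 0 := by rw [two_smul, ← neg_add_cancel v, h]
  exact (smul_eq_zero.mp h2).resolve_left (Ring.two_ne_zero hF)

namespace Representation

variable {G F V : Type*} [Group G] [AddCommGroup V]

theorem apply_ne_neg_of_odd_card [DivisionRing F] [Module F V] (hG : Odd (Nat.card G))
    (hF : ringChar F ≠ 2) (ρ : Representation F G V) {v : V} (hv : v ≠ 0) (g : G) :
    ρ g v ≠ -v := by
  have hg : Odd (orderOf g) := hG.of_dvd_nat (orderOf_dvd_natCard g)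
  have hρg : ρ g ^ orderOf g = 1 := by rw [← map_pow, pow_orderOf_eq_one, map_one]
  exact fun h => hv (eq_zero_of_neg_eq_self hF (Module.End.neg_eq_self_of_apply_eq_neg hg hρg h))

theorem range_apply_neg [Ring F] [Module F V] (ρ : Representation F G V) (v : V) :
    Set.range (fun g => ρ g (-v)) = Neg.neg '' Set.range (fun g => ρ g v) := by
  simp_rw [map_neg]
  exact Set.range_comp' _ _

end Representation

theorem exists_two_orbits_of_equal_size_odd_general {G F V : Type*} [Group G]
    (hGodd : Odd (Nat.card G))
    [Field F] (hFodd : Odd (ringChar F))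
    [AddCommGroup V] [Module F V] [Nontrivial V]
    (ρ : Representation F G V) :
    -- there exist two distinct `G`-orbits in `V \ {0}` of the same cardinality
    ∃ v w : V, v ≠ 0 ∧ w ≠ 0 ∧
      {u | ∃ g : G, ρ g v = u} ≠ {u | ∃ g : G, ρ g w = u} ∧
      Set.ncard {u | ∃ g : G, ρ g v = u} = Set.ncard {u | ∃ g : G, ρ g w = u} := by
  obtain ⟨v, hv⟩ := exists_ne (0 : V)
  have hF : ringChar F ≠ 2 := fun h => Nat.not_odd_iff_even.mpr even_two (h ▸ hFodd)
  refine ⟨v, -v, hv, neg_ne_zero.mpr hv, fun h => ?_, ?_⟩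
  · obtain ⟨g, hg⟩ : -v ∈ {u | ∃ g : G, ρ g v = u} := h ▸ ⟨1, by simp⟩
    exact ρ.apply_ne_neg_of_odd_card hGodd hF hv g hg
  · exact ((congrArg Set.ncard (ρ.range_apply_neg v)).trans
      (Set.ncard_image_of_injective _ neg_injective)).symm

theorem exists_two_orbits_of_equal_size_odd {G F V : Type*} [Group G] [Finite G]
    (hGodd : Odd (Nat.card G))
    [Field F] [Finite F] (hFodd : Odd (ringChar F))
    [AddCommGroup V] [Module F V] [FiniteDimensional F V] [Nontrivial V]
    (ρ : Representation F G V) :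
    -- there exist two distinct `G`-orbits in `V \ {0}` of the same cardinality
    ∃ v w : V, v ≠ 0 ∧ w ≠ 0 ∧
      {u | ∃ g : G, ρ g v = u} ≠ {u | ∃ g : G, ρ g w = u} ∧
      Set.ncard {u | ∃ g : G, ρ g v = u} = Set.ncard {u | ∃ g : G, ρ g w = u} :=
  exists_two_orbits_of_equal_size_odd_general hGodd hFodd ρ
end

section
/- Let G be a finite nonabelian solvable group and let N be a minimal normal subgroup of G which is a p-group for some prime p. If the pair (G,N) has property (D), then N is contained in the commutator subgroup G' of G; equivalently, every linear character of G restricts trivially to N. -/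
open CategoryTheory

/-- `χ : G → ℂ` is an irreducible (complex) character of `G`: it is the character of some
simple (= irreducible) finite-dimensional complex representation of `G`. -/
def IsIrrChar (G : Type) [Group G] (χ : G → ℂ) : Prop :=
  ∃ V : FDRep ℂ G, Simple V ∧ V.character = χ

/-- `χ ∈ Irr(G|N)`: `χ` is an irreducible character of `G` whose kernel does not contain `N`. -/
def MemIrrRel (G : Type) [Group G] (N : Subgroup G) (χ : G → ℂ) : Prop :=
  IsIrrChar G χ ∧ ∃ x ∈ N, χ x ≠ χ 1

/-- The pair `(G, N)` has property (D): the characters in `Irr(G|N)` have pairwise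
distinct degrees. -/
def PropertyD (G : Type) [Group G] (N : Subgroup G) : Prop :=
  ∀ χ ψ : G → ℂ, MemIrrRel G N χ → MemIrrRel G N ψ → χ 1 = ψ 1 → χ = ψ

/-!
Suppose `N ⊄ G'` and pick `n ∈ N \ G'`. Linear characters are irreducible of degree one, so by
(D) exactly one character `λ` of the abelianization `A = G/G'` is nontrivial at `a = nG'`. Then
`λ⁻¹ = λ` and `λμ = λ` for every `μ` trivial at `a`; since characters separate points of `A`
and of `A/⟨a⟩`, this forces `A = {1, a}`, i.e. `G = G'N`. Minimality makes `N ∩ G' = 1`, so `N`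
is central, hence `G' = [G'N, G'N] = [G', G']`, and solvability gives `G' = 1`.
-/

open scoped commutatorElement

noncomputable def linearFDRep {G : Type} [Group G] (φ : G →* ℂˣ) : FDRep ℂ G :=
  FDRep.of ((Algebra.lmul ℂ ℂ).toMonoidHom.comp ((Units.coeHom ℂ).comp φ))

lemma linearFDRep_character {G : Type} [Group G] (φ : G →* ℂˣ) :
    (linearFDRep φ).character = fun g => (φ g : ℂ) :=
  funext fun g => Algebra.trace_self_apply (φ g : ℂ)

lemma isIrrChar_unitsHom {G : Type} [Group G] [Finite G] (φ : G →* ℂˣ) :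
    IsIrrChar G (fun g => (φ g : ℂ)) := by
  have := Fintype.ofFinite G
  refine ⟨linearFDRep φ, ?_, linearFDRep_character φ⟩
  rw [FDRep.simple_iff_char_is_norm_one, linearFDRep_character]
  simp

lemma PropertyD.subsingleton_unitsHom {G : Type} [Group G] [Finite G] {N : Subgroup G}
    (hD : PropertyD G N) : {φ : G →* ℂˣ | ∃ x ∈ N, φ x ≠ 1}.Subsingleton := by
  have hmem : ∀ φ : G →* ℂˣ, (∃ x ∈ N, φ x ≠ 1) → MemIrrRel G N (fun g => (φ g : ℂ)) :=
    fun φ ⟨x, hx, hφx⟩ => ⟨isIrrChar_unitsHom φ, x, hx, by simpa using hφx⟩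
  intro φ hφ ψ hψ
  ext g
  exact congrFun (hD _ _ (hmem φ hφ) (hmem ψ hψ) (by simp)) g

lemma eq_one_or_eq_of_subsingleton_unitsHom {A : Type*} [CommGroup A] [Finite A] {a : A}
    (ha : a ≠ 1) (hunique : {χ : A →* ℂˣ | χ a ≠ 1}.Subsingleton) (b : A) :
    b = 1 ∨ b = a := by
  classical
  obtain ⟨χ₀, hχ₀⟩ := CommGroup.exists_apply_ne_one_of_hasEnoughRootsOfUnity A ℂ ha
  have htriv : ∀ μ : A →* ℂˣ, μ a = 1 → μ = 1 := fun μ hμ =>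
    mul_left_cancel ((hunique (show (χ₀ * μ) a ≠ 1 by simpa [hμ]) hχ₀).trans (mul_one χ₀).symm)
  have hgen : b ∈ Subgroup.zpowers a := by
    by_contra hb
    obtain ⟨μ, hμ⟩ := CommGroup.exists_apply_ne_one_of_hasEnoughRootsOfUnity _ ℂ
      (a := (b : A ⧸ Subgroup.zpowers a)) fun h => hb ((QuotientGroup.eq_one_iff b).mp h)
    have := htriv (μ.comp (QuotientGroup.mk' _))
      (by simp [(QuotientGroup.eq_one_iff a).mpr (Subgroup.mem_zpowers a)])
    exact hμ (by simpa using DFunLike.congr_fun this b)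
  have hsq : a ^ 2 = 1 := by
    by_contra h
    obtain ⟨χ, hχ⟩ := CommGroup.exists_apply_ne_one_of_hasEnoughRootsOfUnity A ℂ h
    have hχa : χ a ≠ 1 := fun h' => hχ (by simp [h'])
    have hinv : χ⁻¹ = χ := hunique (show χ⁻¹ a ≠ 1 by simpa using hχa) hχa
    apply hχ
    rw [map_pow, sq]
    nth_rewrite 1 [← hinv]
    simp
  have horder : orderOf a = 2 := orderOf_eq_prime hsq ha
  rw [mem_zpowers_iff_mem_range_orderOf, horder] at hgen
  obtain ⟨k, hk, rfl⟩ := Finset.mem_image.mp hgen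
  rw [Finset.mem_range] at hk
  interval_cases k <;> simp

lemma commutatorElement_mul_left_of_mem_center {G : Type*} [Group G] {z : G}
    (hz : z ∈ Subgroup.center G) (g h : G) : ⁅g * z, h⁆ = ⁅g, h⁆ := by
  have hzh : z * h * z⁻¹ = h := by rw [← Subgroup.mem_center_iff.mp hz h, mul_inv_cancel_right]
  calc ⁅g * z, h⁆ = g * (z * h * z⁻¹) * g⁻¹ * h⁻¹ := by group
    _ = ⁅g, h⁆ := by rw [hzh, commutatorElement_def]

lemma commutatorElement_mul_right_of_mem_center {G : Type*} [Group G] {z : G}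
    (hz : z ∈ Subgroup.center G) (g h : G) : ⁅g, h * z⁆ = ⁅g, h⁆ := by
  rw [← commutatorElement_inv, commutatorElement_mul_left_of_mem_center hz, commutatorElement_inv]

lemma Subgroup.commutator_sup_of_le_center {G : Type*} [Group G] {H Z : Subgroup G}
    (hZ : Z ≤ Subgroup.center G) : ⁅H ⊔ Z, H ⊔ Z⁆ = ⁅H, H⁆ := by
  have : Z.Normal := ⟨fun z hz g => by
    rw [Subgroup.mem_center_iff.mp (hZ hz) g, mul_inv_cancel_right]; exact hz⟩
  refine le_antisymm ((Subgroup.commutator_le).mpr fun g₁ hg₁ g₂ hg₂ => ?_)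
    (Subgroup.commutator_mono le_sup_left le_sup_left)
  obtain ⟨h₁, hh₁, z₁, hz₁, rfl⟩ := Subgroup.mem_sup_of_normal_right.mp hg₁
  obtain ⟨h₂, hh₂, z₂, hz₂, rfl⟩ := Subgroup.mem_sup_of_normal_right.mp hg₂
  rw [commutatorElement_mul_left_of_mem_center (hZ hz₁),
    commutatorElement_mul_right_of_mem_center (hZ hz₂)]
  exact Subgroup.commutator_mem_commutator hh₁ hh₂

lemma le_center_of_minimal_of_not_le_commutator {G : Type*} [Group G] {N : Subgroup G}
    (hNnorm : N.Normal) (hNmin : ∀ M : Subgroup G, M.Normal → M ≠ ⊥ → M ≤ N → M = N)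
    (hN : ¬N ≤ commutator G) : N ≤ Subgroup.center G := by
  have hinf : N ⊓ commutator G = ⊥ := by
    by_contra h
    exact hN (hNmin _ inferInstance h inf_le_left ▸ inf_le_right)
  rw [← Subgroup.commutator_top_right_eq_bot_iff_le_center, ← le_bot_iff, ← hinf]
  exact le_inf (Subgroup.commutator_le_left N ⊤) (Subgroup.commutator_mono le_top le_top)

theorem le_commutator_of_propertyD_general {G : Type} [Group G] [Finite G]
    (hsolv : IsSolvable G) (hnonab : ∃ a b : G, a * b ≠ b * a)
    (N : Subgroup G) (hNnorm : N.Normal)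
    (hNmin : ∀ M : Subgroup G, M.Normal → M ≠ ⊥ → M ≤ N → M = N)
    (hD : PropertyD G N) :
    N ≤ commutator G := by
  by_contra hNG
  obtain ⟨n, hnN, hn⟩ := SetLike.not_le_iff_exists.mp hNG
  have hker (g : G) : g ∈ commutator G ↔ Abelianization.of g = 1 := by
    rw [← Abelianization.ker_of, MonoidHom.mem_ker]
  have hunique : {χ : Abelianization G →* ℂˣ | χ (Abelianization.of n) ≠ 1}.Subsingleton :=
    fun χ hχ ψ hψ => Abelianization.hom_ext χ ψ <| hD.subsingleton_unitsHom
      (show ∃ x ∈ N, χ.comp Abelianization.of x ≠ 1 from ⟨n, hnN, hχ⟩)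
      (show ∃ x ∈ N, ψ.comp Abelianization.of x ≠ 1 from ⟨n, hnN, hψ⟩)
  have hof (g : G) : Abelianization.of g = 1 ∨ Abelianization.of g = Abelianization.of n :=
    eq_one_or_eq_of_subsingleton_unitsHom (mt (hker n).mpr hn) hunique _
  have hsup : commutator G ⊔ N = ⊤ := by
    refine eq_top_iff.mpr fun g _ => ?_
    rcases hof g with h | h
    · exact Subgroup.mem_sup_left ((hker g).mpr h)
    · have hgn : g * n⁻¹ ∈ commutator G := (hker _).mpr (by simp [h])
      simpa using Subgroup.mul_mem_sup hgn hnN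
  have hG' : commutator G = ⊥ := by
    by_contra h
    have : Group.IsSolvable G := hsolv
    refine (Group.IsSolvable.commutator_lt_of_ne_bot h).ne ?_
    rw [← Subgroup.commutator_sup_of_le_center
      (le_center_of_minimal_of_not_le_commutator hNnorm hNmin hNG), hsup, commutator_def]
  obtain ⟨a, b, hab⟩ := hnonab
  exact hab (((commutator_eq_bot_iff G).mp hG').is_comm.comm a b)

theorem le_commutator_of_propertyD {G : Type} [Group G] [Finite G]
    (hsolv : IsSolvable G) (hnonab : ∃ a b : G, a * b ≠ b * a)
    (N : Subgroup G) (hNnorm : N.Normal) (hNbot : N ≠ ⊥)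
    (hNmin : ∀ M : Subgroup G, M.Normal → M ≠ ⊥ → M ≤ N → M = N)
    (p : ℕ) (hp : p.Prime) (hNp : IsPGroup p N)
    (hD : PropertyD G N) :
    N ≤ commutator G :=
  le_commutator_of_propertyD_general hsolv hnonab N hNnorm hNmin hD
end
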